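/- Let $\alpha(q) = \partial_2 A_2(q)$ where $A_2(q_1,q_2) = \int_0^{q_1} B(s,q_2)\,ds$ (extended to complex $q_1$ in the strip $U_r$). Suppose $|\partial_2 B(q_1,q_2)| \le \frac{(1-\varepsilon)b_0}{2r}$ on $U_r \times \mathbb{R}$, $\partial_2 B$ real on the real axis, and $\mathrm{Re}\, B \ge (1-\varepsilon)b_0$ on $U_r \times \mathbb{R}$. Then $|\mathrm{Im}\, \alpha(q)| < \frac{(1-\varepsilon)b_0}{2}$ for all $q \in U_r \times \mathbb{R}$, and consequently $\mathrm{Re}\,(B + i\alpha) \ge \frac{(1-\varepsilon)b_0}{2} > 0$ on $U_r \times \mathbb{R}$. -/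

import Mathlib

/-! For fixed `q₂`, `w ↦ w * ∫₀¹ B(t w, q₂) dt` is a holomorphic primitive of `B(·, q₂)` on the
strip, real on the real axis. Integrating it up the vertical segment from `Re q₁` to `q₁` gives
`Im A₂(q₁, u) = Re ∫₀^{Im q₁} B(Re q₁ + i s, u) ds`, so, differentiating in `u` under the integral
sign, `Im α(q)` is the real part of `∫₀^{Im q₁} ∂₂B(Re q₁ + i s, q₂) ds`, whose modulus is at most
`(1 - ε) b₀ / (2r) · |Im q₁| < (1 - ε) b₀ / 2`. Finally `Re (B + i α) = Re B - Im α`. -/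

open intervalIntegral Metric Set MeasureTheory Filter
open scoped Interval

theorem hasDerivAt_intervalIntegral_of_norm_deriv_le {E : Type*} [NormedAddCommGroup E]
    [NormedSpace ℝ E] [CompleteSpace E] {F : ℝ → ℝ → E} {a b M : ℝ}
    (hF : Continuous (Function.uncurry F))
    (hdiff : ∀ t ∈ Ι a b, ∀ u, DifferentiableAt ℝ (F t) u)
    (hbound : ∀ t ∈ Ι a b, ∀ u, ‖deriv (F t) u‖ ≤ M) (u₀ : ℝ) :
    HasDerivAt (fun u => ∫ t in a..b, F t u) (∫ t in a..b, deriv (F t) u₀) u₀ := by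
  have hFu : ∀ u, Continuous fun t => F t u := fun u =>
    hF.comp (continuous_id.prodMk continuous_const)
  exact (hasDerivAt_integral_of_dominated_loc_of_deriv_le (F := fun u t => F t u)
    (bound := fun _ => M) univ_mem
    (.of_forall fun u => (hFu u).aestronglyMeasurable) ((hFu u₀).intervalIntegrable a b)
    ((stronglyMeasurable_deriv_with_param hF).comp_measurable
      (measurable_id.prodMk measurable_const)).aestronglyMeasurable
    (.of_forall fun t ht u _ => hbound t ht u) intervalIntegrable_const
    (.of_forall fun t ht u _ => (hdiff t ht u).hasDerivAt)).2

section RadialPrimitive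

variable {f : ℂ → ℂ} {U : Set ℂ}

theorem exists_isCompact_ofReal_mul_mem (hU : IsOpen U) (hU0 : StarConvex ℝ 0 U)
    {z : ℂ} (hz : z ∈ U) :
    ∃ δ > 0, ∃ K ⊆ U, IsCompact K ∧ ∀ t ∈ Icc (0:ℝ) 1, ∀ w ∈ closedBall z δ, (t:ℂ) * w ∈ K := by
  set S := (fun t : ℝ => (t:ℂ) * z) '' Icc 0 1
  have hS : IsCompact S := isCompact_Icc.image (by fun_prop)
  have hSU : S ⊆ U := by
    rintro _ ⟨t, ht, rfl⟩
    simpa [Complex.real_smul] using hU0.smul_mem hz ht.1 ht.2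
  obtain ⟨δ, hδ, hδU⟩ := hS.exists_cthickening_subset_open hU hSU
  refine ⟨δ, hδ, _, hδU, hS.cthickening, fun t ht w hw => ?_⟩
  refine mem_cthickening_of_dist_le _ ((t:ℂ) * z) δ S ⟨t, ht, rfl⟩ ?_
  rw [dist_eq_norm, ← mul_sub, norm_mul, Complex.norm_real, Real.norm_of_nonneg ht.1]
  calc (t:ℝ) * ‖w - z‖ ≤ 1 * δ :=
        mul_le_mul ht.2 (mem_closedBall_iff_norm.mp hw) (norm_nonneg _) zero_le_one
    _ = δ := one_mul δ

theorem hasDerivAt_integral_comp_ofReal_mul (hU : IsOpen U) (hU0 : StarConvex ℝ 0 U)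
    (hf : DifferentiableOn ℂ f U) {z : ℂ} (hz : z ∈ U) :
    HasDerivAt (fun w => ∫ t in (0:ℝ)..1, f (t * w))
      (∫ t in (0:ℝ)..1, t * deriv f (t * z)) z := by
  obtain ⟨δ, hδ, K, hKU, hK, hmem⟩ := exists_isCompact_ofReal_mul_mem hU hU0 hz
  have hf' : ContinuousOn (deriv f) U := ((hf.analyticOnNhd hU).deriv).continuousOn
  obtain ⟨C, hC⟩ := hK.exists_bound_of_continuousOn (hf'.mono hKU)
  have hIoc : Ι (0:ℝ) 1 ⊆ Icc 0 1 := by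
    rw [uIoc_of_le zero_le_one]; exact Ioc_subset_Icc_self
  have hcont : ∀ w ∈ closedBall z δ, ContinuousOn (fun t : ℝ => f (t * w)) (Icc 0 1) :=
    fun w hw => hf.continuousOn.comp (by fun_prop) fun t ht => hKU (hmem t ht w hw)
  have hcont' : ContinuousOn (fun t : ℝ => (t:ℂ) * deriv f (t * z)) (Icc 0 1) :=
    Complex.continuous_ofReal.continuousOn.mul
      (hf'.comp (by fun_prop) fun t ht => hKU (hmem t ht z (mem_closedBall_self hδ.le)))
  refine (hasDerivAt_integral_of_dominated_loc_of_deriv_le (μ := volume)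
    (F := fun w t => f (t * w)) (F' := fun w t => t * deriv f (t * w)) (bound := fun _ => C)
    (ball_mem_nhds z hδ) ?_ ?_ ?_ ?_ intervalIntegrable_const ?_).2
  · filter_upwards [ball_mem_nhds z hδ] with w hw
    exact ((hcont w (ball_subset_closedBall hw)).mono hIoc).aestronglyMeasurable
      measurableSet_uIoc
  · exact (hcont z (mem_closedBall_self hδ.le)).intervalIntegrable_of_Icc zero_le_one
  · exact (hcont'.mono hIoc).aestronglyMeasurable measurableSet_uIoc
  · refine .of_forall fun t ht w hw => ?_
    have ht' := hIoc ht
    have hCw := hC _ (hmem t ht' w (ball_subset_closedBall hw))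
    rw [norm_mul, Complex.norm_real, Real.norm_of_nonneg ht'.1]
    exact (mul_le_of_le_one_left (norm_nonneg _) ht'.2).trans hCw
  · refine .of_forall fun t ht w hw => ?_
    have hfw := (hf.differentiableAt (hU.mem_nhds (hKU (hmem t (hIoc ht) w
      (ball_subset_closedBall hw))))).hasDerivAt
    have hlin : HasDerivAt (fun w : ℂ => (t:ℂ) * w) t w := by
      simpa using (hasDerivAt_id w).const_mul (t:ℂ)
    exact (hfw.comp w hlin).congr_deriv (mul_comm _ _)

theorem integral_comp_ofReal_mul_add_mul_integral (hU : IsOpen U) (hU0 : StarConvex ℝ 0 U)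
    (hf : DifferentiableOn ℂ f U) {z : ℂ} (hz : z ∈ U) :
    (∫ t in (0:ℝ)..1, f (t * z)) + z * ∫ t in (0:ℝ)..1, t * deriv f (t * z) = f z := by
  have hmem : ∀ t ∈ uIcc (0:ℝ) 1, (t:ℂ) * z ∈ U := fun t ht => by
    rw [uIcc_of_le zero_le_one] at ht
    simpa [Complex.real_smul] using hU0.smul_mem hz ht.1 ht.2
  have hf' : ContinuousOn (deriv f) U := ((hf.analyticOnNhd hU).deriv).continuousOn
  have hi1 : IntervalIntegrable (fun t : ℝ => f (t * z)) volume 0 1 :=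
    (hf.continuousOn.comp (by fun_prop) hmem).intervalIntegrable
  have hi2 : IntervalIntegrable (fun t : ℝ => z * (t * deriv f (t * z))) volume 0 1 :=
    (continuousOn_const.mul (Complex.continuous_ofReal.continuousOn.mul
      (hf'.comp (by fun_prop) hmem))).intervalIntegrable
  have hderiv : ∀ t ∈ uIcc (0:ℝ) 1, HasDerivAt (fun t : ℝ => (t:ℂ) * f (t * z))
      (f (t * z) + z * (t * deriv f (t * z))) t := by
    intro t ht
    have hfz := (hf.differentiableAt (hU.mem_nhds (hmem t ht))).hasDerivAt
    have hseg : HasDerivAt (fun t : ℝ => f (t * z)) (deriv f (t * z) * z) t :=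
      (hfz.comp (t:ℂ) (hasDerivAt_mul_const z)).comp_ofReal
    refine ((hasDerivAt_id t).ofReal_comp.mul hseg).congr_deriv ?_
    simp only [id, Complex.ofReal_one, one_mul]
    ring
  rw [← intervalIntegral.integral_const_mul, ← integral_add hi1 hi2,
    integral_eq_sub_of_hasDerivAt hderiv (hi1.add hi2)]
  simp

theorem hasDerivAt_mul_integral_comp_ofReal_mul (hU : IsOpen U) (hU0 : StarConvex ℝ 0 U)
    (hf : DifferentiableOn ℂ f U) {z : ℂ} (hz : z ∈ U) :
    HasDerivAt (fun w => w * ∫ t in (0:ℝ)..1, f (t * w)) (f z) z := by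
  refine ((hasDerivAt_id z).mul (hasDerivAt_integral_comp_ofReal_mul hU hU0 hf hz)).congr_deriv ?_
  rw [← integral_comp_ofReal_mul_add_mul_integral hU hU0 hf hz, id, one_mul]

end RadialPrimitive

open Complex in
theorem sub_eq_I_mul_integral_of_hasDerivAt {G f : ℂ → ℂ} {x y : ℝ}
    (hG : ∀ s ∈ uIcc 0 y, HasDerivAt G (f (x + s * I)) (x + s * I))
    (hf : ContinuousOn (fun s : ℝ => f (x + s * I)) (uIcc 0 y)) :
    G (x + y * I) - G x = I * ∫ s in (0:ℝ)..y, f (x + s * I) := by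
  have hderiv : ∀ s ∈ uIcc 0 y, HasDerivAt (fun s : ℝ => G (x + s * I)) (I * f (x + s * I)) s :=
    fun s hs => (((hG s hs).comp (s:ℂ) ((hasDerivAt_mul_const I).const_add (x:ℂ))).comp_ofReal
      ).congr_deriv (mul_comm _ _)
  rw [← intervalIntegral.integral_const_mul,
    integral_eq_sub_of_hasDerivAt hderiv (continuousOn_const.mul hf).intervalIntegrable]
  simp

section Strip

variable {r : ℝ}

theorem isOpen_setOf_abs_im_lt : IsOpen {z : ℂ | |z.im| < r} :=
  isOpen_lt (by fun_prop) continuous_const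

theorem starConvex_setOf_abs_im_lt : StarConvex ℝ 0 {z : ℂ | |z.im| < r} := by
  refine starConvex_zero_iff.mpr fun z hz a ha0 ha1 => ?_
  simp only [mem_ofPred_eq, Complex.smul_im, smul_eq_mul, abs_mul, abs_of_nonneg ha0] at hz ⊢
  exact (mul_le_of_le_one_left (abs_nonneg _) ha1).trans_lt hz

open Complex in
theorem im_mul_integral_comp_ofReal_mul {f : ℂ → ℂ}
    (hf : DifferentiableOn ℂ f {z | |z.im| < r}) (hreal : ∀ x : ℝ, (f x).im = 0)
    {z : ℂ} (hz : |z.im| < r) :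
    (z * ∫ t in (0:ℝ)..1, f (t * z)).im = (∫ s in (0:ℝ)..z.im, f (z.re + s * I)).re := by
  have hmem : ∀ s ∈ uIcc 0 z.im, |((z.re:ℂ) + s * I).im| < r := fun s hs => by
    simpa using (abs_sub_left_of_mem_uIcc hs).trans_lt (by simpa using hz)
  have hsplit := sub_eq_I_mul_integral_of_hasDerivAt
    (G := fun w => w * ∫ t in (0:ℝ)..1, f (t * w)) (fun s hs =>
      hasDerivAt_mul_integral_comp_ofReal_mul isOpen_setOf_abs_im_lt starConvex_setOf_abs_im_lt
        hf (hmem s hs))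
    (hf.continuousOn.comp (by fun_prop) hmem)
  have hreal_int : (∫ t in (0:ℝ)..1, f (t * z.re)).im = 0 := by
    have hf_re : (fun t : ℝ => f (t * z.re)) = fun t : ℝ => ((f (t * z.re)).re : ℂ) :=
      funext fun t => Complex.ext rfl (by rw [ofReal_im, ← ofReal_mul, hreal])
    rw [hf_re, intervalIntegral.integral_ofReal, ofReal_im]
  rw [re_add_im, sub_eq_iff_eq_add'] at hsplit
  simp [hsplit, mul_im, hreal_int]

open Complex in
theorem abs_im_deriv_mul_integral_comp_ofReal_mul_le {B : ℂ → ℝ → ℂ} {M : ℝ}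
    (hhol : ∀ u : ℝ, DifferentiableOn ℂ (fun z => B z u) {z : ℂ | |z.im| < r})
    (hcont : Continuous fun p : ℂ × ℝ => B p.1 p.2)
    (hdiff : ∀ z : ℂ, |z.im| < r → ∀ u : ℝ, DifferentiableAt ℝ (fun u : ℝ => B z u) u)
    (hreal : ∀ x u : ℝ, (B (x : ℂ) u).im = 0)
    (hbound : ∀ z : ℂ, |z.im| < r → ∀ u : ℝ, ‖deriv (fun u : ℝ => B z u) u‖ ≤ M)
    {z : ℂ} (hz : |z.im| < r) (u₀ : ℝ) :
    |(deriv (fun u : ℝ => z * ∫ t in (0:ℝ)..1, B (t * z) u) u₀).im| ≤ M * |z.im| := by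
  have hseg : ∀ t ∈ Ι (0:ℝ) 1, |((t:ℂ) * z).im| < r := fun t ht => by
    rw [uIoc_of_le zero_le_one] at ht
    simpa [Complex.real_smul] using starConvex_setOf_abs_im_lt.smul_mem
      (show z ∈ {z : ℂ | |z.im| < r} from hz) ht.1.le ht.2
  have hvert : ∀ s ∈ Ι 0 z.im, |((z.re:ℂ) + s * I).im| < r := fun s hs => by
    simpa using (abs_sub_left_of_mem_uIcc (uIoc_subset_uIcc hs)).trans_lt (by simpa using hz)
  have hA := (hasDerivAt_intervalIntegral_of_norm_deriv_le (F := fun t u => B (t * z) u)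
    (hcont.comp (by fun_prop : Continuous fun p : ℝ × ℝ => ((p.1:ℂ) * z, p.2)))
    (fun t ht => hdiff _ (hseg t ht)) (fun t ht => hbound _ (hseg t ht)) u₀).const_mul z
  have hV := hasDerivAt_intervalIntegral_of_norm_deriv_le (F := fun s u => B (z.re + s * I) u)
    (hcont.comp (by fun_prop : Continuous fun p : ℝ × ℝ => ((z.re:ℂ) + p.1 * I, p.2)))
    (fun s hs => hdiff _ (hvert s hs)) (fun s hs => hbound _ (hvert s hs)) u₀
  have hfun : (imCLM ∘ fun u => z * ∫ t in (0:ℝ)..1, B (t * z) u) =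
      reCLM ∘ fun u => ∫ s in (0:ℝ)..z.im, B (z.re + s * I) u :=
    funext fun u => im_mul_integral_comp_ofReal_mul (hhol u) (fun x => hreal x u) hz
  have him : (deriv (fun u : ℝ => z * ∫ t in (0:ℝ)..1, B (t * z) u) u₀).im =
      (∫ s in (0:ℝ)..z.im, deriv (fun u => B (z.re + s * I) u) u₀).re := by
    rw [hA.deriv]
    exact (imCLM.hasFDerivAt.comp_hasDerivAt u₀ hA).unique
      (hfun ▸ reCLM.hasFDerivAt.comp_hasDerivAt u₀ hV)
  calc |(deriv (fun u : ℝ => z * ∫ t in (0:ℝ)..1, B (t * z) u) u₀).im|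
      ≤ ‖∫ s in (0:ℝ)..z.im, deriv (fun u => B (z.re + s * I) u) u₀‖ := him ▸ abs_re_le_norm _
    _ ≤ M * |z.im - 0| := norm_integral_le_of_norm_le_const fun s hs => hbound _ (hvert s hs) u₀
    _ = M * |z.im| := by rw [sub_zero]

end Strip

theorem stmt_3_general (r b0 ε : ℝ) (hb0 : 0 < b0) (hε : ε ∈ Set.Ioo (0 : ℝ) 1)
    (B : ℂ → ℝ → ℂ)
    (hhol : ∀ q2 : ℝ, DifferentiableOn ℂ (fun q1 => B q1 q2) {z : ℂ | |z.im| < r})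
    (hcont : Continuous fun p : ℂ × ℝ => B p.1 p.2)
    (hd2 : ∀ q1 : ℂ, |q1.im| < r → ∀ q2 : ℝ, DifferentiableAt ℝ (fun s : ℝ => B q1 s) q2)
    (hrealB : ∀ x : ℝ, ∀ q2 : ℝ, (B (x : ℂ) q2).im = 0)
    (hbound : ∀ q1 : ℂ, |q1.im| < r → ∀ q2 : ℝ,
      ‖deriv (fun s : ℝ => B q1 s) q2‖ ≤ (1 - ε) * b0 / (2 * r))
    (hRe : ∀ q1 : ℂ, |q1.im| < r → ∀ q2 : ℝ, (1 - ε) * b0 ≤ (B q1 q2).re)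
    (A2 : ℂ → ℝ → ℂ)
    (hA2 : ∀ q1 : ℂ, ∀ q2 : ℝ, A2 q1 q2 = q1 * ∫ t in (0:ℝ)..1, B ((t : ℂ) * q1) q2)
    (α : ℂ → ℝ → ℂ)
    (hα : ∀ q1 : ℂ, ∀ q2 : ℝ, α q1 q2 = deriv (fun s : ℝ => A2 q1 s) q2) :
    ∀ q1 : ℂ, |q1.im| < r → ∀ q2 : ℝ,
      |(α q1 q2).im| < (1 - ε) * b0 / 2 ∧
        (1 - ε) * b0 / 2 ≤ (B q1 q2 + Complex.I * α q1 q2).re := by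
  intro q1 hq1 q2
  have hr : 0 < r := (abs_nonneg _).trans_lt hq1
  have hM : 0 < (1 - ε) * b0 / (2 * r) := div_pos (mul_pos (sub_pos.2 hε.2) hb0) (by positivity)
  have him_lt : |(α q1 q2).im| < (1 - ε) * b0 / 2 := calc
    |(α q1 q2).im| ≤ (1 - ε) * b0 / (2 * r) * |q1.im| := by
      simpa only [hα, hA2] using
        abs_im_deriv_mul_integral_comp_ofReal_mul_le hhol hcont hd2 hrealB hbound hq1 q2
    _ < (1 - ε) * b0 / (2 * r) * r := by gcongr
    _ = (1 - ε) * b0 / 2 := by field_simp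
  have hre : (B q1 q2 + Complex.I * α q1 q2).re = (B q1 q2).re - (α q1 q2).im := by
    simp [sub_eq_add_neg]
  exact ⟨him_lt, by linarith [hRe q1 hq1 q2, le_abs_self (α q1 q2).im]⟩

/-- Bound on `Im α` where `α = ∂₂ A₂`, `A₂(q1,q2) = ∫_{[0,q1]} B(s,q2) ds`,
and positivity of `Re (B + i α)`. -/
theorem stmt_3 (r b0 ε : ℝ) (hr : 0 < r) (hb0 : 0 < b0) (hε : ε ∈ Set.Ioo (0 : ℝ) 1)
    (B : ℂ → ℝ → ℂ)
    (hhol : ∀ q2 : ℝ, DifferentiableOn ℂ (fun q1 => B q1 q2) {z : ℂ | |z.im| < r})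
    (hcont : Continuous fun p : ℂ × ℝ => B p.1 p.2)
    (hcontd : Continuous fun p : ℂ × ℝ => deriv (fun s : ℝ => B p.1 s) p.2)
    (hd2 : ∀ q1 : ℂ, |q1.im| < r → ∀ q2 : ℝ, DifferentiableAt ℝ (fun s : ℝ => B q1 s) q2)
    (hrealB : ∀ x : ℝ, ∀ q2 : ℝ, (B (x : ℂ) q2).im = 0)
    (hreald2 : ∀ x : ℝ, ∀ q2 : ℝ, (deriv (fun s : ℝ => B (x : ℂ) s) q2).im = 0)
    (hbound : ∀ q1 : ℂ, |q1.im| < r → ∀ q2 : ℝ,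
      ‖deriv (fun s : ℝ => B q1 s) q2‖ ≤ (1 - ε) * b0 / (2 * r))
    (hRe : ∀ q1 : ℂ, |q1.im| < r → ∀ q2 : ℝ, (1 - ε) * b0 ≤ (B q1 q2).re)
    (A2 : ℂ → ℝ → ℂ)
    (hA2 : ∀ q1 : ℂ, ∀ q2 : ℝ, A2 q1 q2 = q1 * ∫ t in (0:ℝ)..1, B ((t : ℂ) * q1) q2)
    (α : ℂ → ℝ → ℂ)
    (hα : ∀ q1 : ℂ, ∀ q2 : ℝ, α q1 q2 = deriv (fun s : ℝ => A2 q1 s) q2) :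
    ∀ q1 : ℂ, |q1.im| < r → ∀ q2 : ℝ,
      |(α q1 q2).im| < (1 - ε) * b0 / 2 ∧
        (1 - ε) * b0 / 2 ≤ (B q1 q2 + Complex.I * α q1 q2).re :=
  stmt_3_general r b0 ε hb0 hε B hhol hcont hd2 hrealB hbound hRe A2 hA2 α hα
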